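/- Let μ* be an upper quasi-density on ℕ⁺ with lower dual μ∗(X) := 1 − μ*(ℕ⁺ \ X). Then the images of μ*, μ∗, and the induced quasi-density μ (the restriction of μ* to sets X with μ∗(X) = μ*(X)) are all equal to the full interval [0,1]. -/

import Mathlib

/-!
Write `r ∈ [0, 1)` in binary and let `X` be the set of `x` whose `2`-adic valuation `j` is a
position where the digit of `r` is `1`. Upper quasi-densities need not be monotone, so only
exact set identities can be used: `X` is the union of (possibly) the odd numbers, of
quasi-density at most `1/2`, and the dilate `2 • X'` of a set of the same kind for `2 r mod 1`,
and dilation by `2` halves `μ*`. Induction gives `μ*(X) ≤ r + 2⁻ⁿ` and likewise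
`μ*(Xᶜ) ≤ 1 - r + 2⁻ⁿ` for every `n`. Since `μ*(X) + μ*(Xᶜ) ≥ μ*(ℕ⁺) = 1`, both bounds are
equalities, so `μ*(X) = μ_*(X) = r`.
-/

open Finset Filter

def IsUnionSubadditive {α : Type*} (μ : Set α → ℝ) : Prop :=
  ∀ X Y : Set α, μ (X ∪ Y) ≤ μ X + μ Y

def IsAffineHomogeneous (μ : Set ℕ+ → ℝ) : Prop :=
  ∀ (X : Set ℕ+) (h k : ℕ+), μ ((fun x => k * x + h) '' X) = ((k : ℕ) : ℝ)⁻¹ * μ X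

namespace IsAffineHomogeneous

variable {μ : Set ℕ+ → ℝ}

theorem map_empty (hμ : IsAffineHomogeneous μ) : μ ∅ = 0 := by
  have := hμ ∅ 1 2
  simp only [Set.image_empty, PNat.val_ofNat, Nat.cast_ofNat] at this
  linarith

theorem map_image_add (hμ : IsAffineHomogeneous μ) (X : Set ℕ+) (h : ℕ+) :
    μ ((· + h) '' X) = μ X := by
  simpa using hμ X h 1

theorem map_image_mul (hμ : IsAffineHomogeneous μ) (X : Set ℕ+) (k : ℕ+) :
    μ ((k * ·) '' X) = ((k : ℕ) : ℝ)⁻¹ * μ X := by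
  rw [← hμ.map_image_add _ k, Set.image_image]
  exact hμ X k k

theorem map_singleton (hμ : IsAffineHomogeneous μ) (x : ℕ+) : μ {x} = 0 := by
  have hmul := hμ.map_image_mul {x} 2
  have hadd := hμ.map_image_add {x} x
  have htwo : x + x = 2 * x := PNat.eq (by simp [two_mul])
  simp only [Set.image_singleton, htwo, PNat.val_ofNat, Nat.cast_ofNat] at hmul hadd
  linarith

end IsAffineHomogeneous

theorem PNat.padicValNat_two_mul (y : ℕ+) :
    padicValNat 2 ((2 * y : ℕ+) : ℕ) = padicValNat 2 y + 1 := by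
  rw [PNat.mul_coe, PNat.val_ofNat, padicValNat.mul two_ne_zero y.ne_zero, padicValNat_self,
    add_comm]

theorem PNat.exists_eq_two_mul_of_padicValNat_ne_zero {x : ℕ+} (hx : padicValNat 2 x ≠ 0) :
    ∃ y : ℕ+, x = 2 * y :=
  PNat.dvd_iff.mpr (dvd_of_one_le_padicValNat (Nat.one_le_iff_ne_zero.mpr hx))

theorem setOf_padicValNat_eq_zero :
    {x : ℕ+ | padicValNat 2 x = 0} = insert 1 ((fun x => 2 * x + 1) '' Set.univ) := by
  ext x
  simp only [Set.mem_ofPred_eq, Set.image_univ, Set.mem_insert_iff, Set.mem_range,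
    padicValNat.eq_zero_iff, ← PNat.coe_inj, PNat.add_coe, PNat.mul_coe, PNat.val_ofNat,
    x.ne_zero, false_or, OfNat.ofNat_ne_one]
  constructor
  · intro hodd
    rcases (x : ℕ).lt_or_ge 2 with hx | hx
    · exact Or.inl (by have := x.pos; omega)
    · exact Or.inr ⟨⟨((x : ℕ) - 1) / 2, by omega⟩, by simp only [PNat.mk_coe]; omega⟩
  · rintro (hx | ⟨y, hy⟩) <;> omega

theorem setOf_padicValNat_mem_eq_union (S : Set ℕ) :
    {x : ℕ+ | padicValNat 2 x ∈ S} =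
      {x : ℕ+ | padicValNat 2 x ∈ S ∩ {0}} ∪ (2 * ·) '' {y | padicValNat 2 y + 1 ∈ S} := by
  ext x
  simp only [Set.mem_ofPred_eq, Set.mem_union, Set.mem_inter_iff, Set.mem_singleton_iff,
    Set.mem_image]
  constructor
  · intro hx
    by_cases hv : padicValNat 2 x = 0
    · exact Or.inl ⟨hx, hv⟩
    · obtain ⟨y, rfl⟩ := PNat.exists_eq_two_mul_of_padicValNat_ne_zero hv
      exact Or.inr ⟨y, PNat.padicValNat_two_mul y ▸ hx, rfl⟩
  · rintro (⟨hx, -⟩ | ⟨y, hy, rfl⟩)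
    · exact hx
    · rwa [PNat.padicValNat_two_mul]

section UpperQuasiDensity

variable {μ : Set ℕ+ → ℝ}

theorem one_le_map_add_map_compl (huniv : μ Set.univ = 1) (hsub : IsUnionSubadditive μ)
    (X : Set ℕ+) : 1 ≤ μ X + μ Xᶜ := by
  simpa [huniv] using hsub X Xᶜ

theorem map_setOf_padicValNat_eq_zero_le (hle : ∀ X : Set ℕ+, μ X ≤ 1)
    (hsub : IsUnionSubadditive μ) (hμ : IsAffineHomogeneous μ) :
    μ {x : ℕ+ | padicValNat 2 x = 0} ≤ 2⁻¹ := by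
  have hodd := hμ Set.univ 1 2
  simp only [PNat.val_ofNat, Nat.cast_ofNat] at hodd
  rw [setOf_padicValNat_eq_zero, Set.insert_eq]
  linarith [hsub {1} ((fun x => 2 * x + 1) '' Set.univ), hμ.map_singleton 1, hle Set.univ]

theorem map_setOf_padicValNat_mem_le (hle : ∀ X : Set ℕ+, μ X ≤ 1)
    (hsub : IsUnionSubadditive μ) (hμ : IsAffineHomogeneous μ) (n : ℕ) (S : Set ℕ) :
    μ {x : ℕ+ | padicValNat 2 x ∈ S} ≤
      ∑ j ∈ range n, S.indicator (fun j => ((2 : ℝ) ^ (j + 1))⁻¹) j + ((2 : ℝ) ^ n)⁻¹ := by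
  induction n generalizing S with
  | zero => simpa using hle _
  | succ n ih =>
    have hshift : ∀ j, S.indicator (fun j => ((2 : ℝ) ^ (j + 1))⁻¹) (j + 1) =
        2⁻¹ * {j | j + 1 ∈ S}.indicator (fun j => ((2 : ℝ) ^ (j + 1))⁻¹) j := by
      intro j
      by_cases hj : j + 1 ∈ S <;> simp [Set.indicator, hj, pow_succ]
    have hzero : μ {x : ℕ+ | padicValNat 2 x ∈ S ∩ {0}} ≤
        S.indicator (fun j => ((2 : ℝ) ^ (j + 1))⁻¹) 0 := by
      by_cases h0 : 0 ∈ S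
      · simpa [h0, Set.inter_eq_right.mpr (Set.singleton_subset_iff.mpr h0)] using
          map_setOf_padicValNat_eq_zero_le hle hsub hμ
      · simp [h0, Set.inter_singleton_eq_empty.mpr h0, hμ.map_empty]
    rw [setOf_padicValNat_mem_eq_union, sum_range_succ', pow_succ', mul_inv]
    simp only [hshift, ← mul_sum]
    have hdouble := hμ.map_image_mul {y : ℕ+ | padicValNat 2 y + 1 ∈ S} 2
    simp only [PNat.val_ofNat, Nat.cast_ofNat] at hdouble
    have hhalf : 2⁻¹ * μ {y : ℕ+ | padicValNat 2 y + 1 ∈ S} ≤ 2⁻¹ *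
        (∑ j ∈ range n, {j | j + 1 ∈ S}.indicator (fun j => ((2 : ℝ) ^ (j + 1))⁻¹) j +
          ((2 : ℝ) ^ n)⁻¹) :=
      mul_le_mul_of_nonneg_left (ih {j | j + 1 ∈ S}) (by norm_num)
    have hunion := hsub {x : ℕ+ | padicValNat 2 x ∈ S ∩ {0}}
      ((2 * ·) '' {y : ℕ+ | padicValNat 2 y + 1 ∈ S})
    linarith

end UpperQuasiDensity

-- `j ∈ binaryDigits r` iff the digit of weight `2⁻⁽ʲ⁺¹⁾` in the binary expansion of `r` is `1`.
def binaryDigits (r : ℝ) : Set ℕ :=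
  {j | ⌊(2 : ℝ) ^ (j + 1) * r⌋ - 2 * ⌊(2 : ℝ) ^ j * r⌋ = 1}

theorem floor_mul_div_le (r : ℝ) {q : ℝ} (hq : 0 < q) : ⌊q * r⌋ / q ≤ r := by
  rw [div_le_iff₀ hq]
  linarith [Int.floor_le (q * r)]

theorem sub_inv_le_floor_mul_div (r : ℝ) {q : ℝ} (hq : 0 < q) : r - q⁻¹ ≤ ⌊q * r⌋ / q := by
  rw [le_div_iff₀ hq, sub_mul, inv_mul_cancel₀ hq.ne']
  linarith [Int.sub_one_lt_floor (q * r)]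

theorem floor_two_mul_sub_two_mul_floor (y : ℝ) :
    ⌊2 * y⌋ - 2 * ⌊y⌋ = 0 ∨ ⌊2 * y⌋ - 2 * ⌊y⌋ = 1 := by
  have hfloor : ⌊y⌋ = ⌊2 * y⌋ / 2 := by
    simpa using Int.floor_div_natCast (2 * y) 2
  omega

theorem indicator_binaryDigits (r : ℝ) (j : ℕ) :
    (binaryDigits r).indicator (fun j => ((2 : ℝ) ^ (j + 1))⁻¹) j =
      ⌊(2 : ℝ) ^ (j + 1) * r⌋ / 2 ^ (j + 1) - ⌊(2 : ℝ) ^ j * r⌋ / 2 ^ j := by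
  have hdigit := floor_two_mul_sub_two_mul_floor ((2 : ℝ) ^ j * r)
  rw [← mul_assoc, ← pow_succ'] at hdigit
  set a := ⌊(2 : ℝ) ^ j * r⌋
  set b := ⌊(2 : ℝ) ^ (j + 1) * r⌋
  rcases hdigit with hd | hd
  · have hb : (b : ℝ) = 2 * a := by exact_mod_cast (by omega : b = 2 * a)
    have hj : j ∉ binaryDigits r := (by omega : ¬b - 2 * a = 1)
    rw [Set.indicator_of_notMem hj, hb, pow_succ]
    field_simp
    ring
  · have hb : (b : ℝ) = 2 * a + 1 := by exact_mod_cast (by omega : b = 2 * a + 1)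
    rw [Set.indicator_of_mem (show j ∈ binaryDigits r from hd), hb, pow_succ]
    field_simp
    ring

theorem sum_indicator_binaryDigits (r : ℝ) (n : ℕ) :
    ∑ j ∈ range n, (binaryDigits r).indicator (fun j => ((2 : ℝ) ^ (j + 1))⁻¹) j =
      ⌊(2 : ℝ) ^ n * r⌋ / 2 ^ n - ⌊r⌋ := by
  simp only [indicator_binaryDigits]
  rw [sum_range_sub (fun j => (⌊(2 : ℝ) ^ j * r⌋ : ℝ) / 2 ^ j)]
  simp

theorem sum_range_inv_two_pow_succ (n : ℕ) :
    ∑ j ∈ range n, ((2 : ℝ) ^ (j + 1))⁻¹ = 1 - ((2 : ℝ) ^ n)⁻¹ := by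
  have htele := sum_range_sub' (fun j => ((2 : ℝ) ^ j)⁻¹) n
  simp only [pow_succ, mul_inv, pow_zero, inv_one] at htele ⊢
  rw [← htele]
  refine sum_congr rfl fun j _ => ?_
  ring

theorem le_of_forall_le_add_inv_two_pow {a b : ℝ} (h : ∀ n : ℕ, a ≤ b + ((2 : ℝ) ^ n)⁻¹) :
    a ≤ b := by
  have hlim : Tendsto (fun n : ℕ => b + ((2 : ℝ) ^ n)⁻¹) atTop (nhds b) := by
    simpa using (tendsto_const_nhds (x := b)).add ((tendsto_inv_atTop_zero (𝕜 := ℝ)).comp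
      (tendsto_pow_atTop_atTop_of_one_lt one_lt_two))
  exact ge_of_tendsto' hlim h

theorem exists_map_eq_and_map_compl_eq {μ : Set ℕ+ → ℝ} (huniv : μ Set.univ = 1)
    (hle : ∀ X : Set ℕ+, μ X ≤ 1) (hsub : IsUnionSubadditive μ) (hμ : IsAffineHomogeneous μ)
    {r : ℝ} (hr : r ∈ Set.Icc (0 : ℝ) 1) : ∃ X : Set ℕ+, μ X = r ∧ μ Xᶜ = 1 - r := by
  suffices ∃ X : Set ℕ+, μ X ≤ r ∧ μ Xᶜ ≤ 1 - r by
    obtain ⟨X, hX, hXc⟩ := this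
    have hcover := one_le_map_add_map_compl huniv hsub X
    exact ⟨X, by linarith, by linarith⟩
  rcases hr.2.eq_or_lt with rfl | hr1
  · exact ⟨Set.univ, hle _, by simp [hμ.map_empty]⟩
  have hfloor : ⌊r⌋ = 0 := Int.floor_eq_zero_iff.mpr ⟨hr.1, hr1⟩
  refine ⟨{x | padicValNat 2 x ∈ binaryDigits r}, le_of_forall_le_add_inv_two_pow fun n => ?_,
    le_of_forall_le_add_inv_two_pow fun n => ?_⟩
  · have hbound := map_setOf_padicValNat_mem_le hle hsub hμ n (binaryDigits r)
    rw [sum_indicator_binaryDigits, hfloor, Int.cast_zero, sub_zero] at hbound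
    linarith [floor_mul_div_le r (pow_pos two_pos n)]
  · have hbound := map_setOf_padicValNat_mem_le hle hsub hμ n (binaryDigits r)ᶜ
    simp only [Set.indicator_compl, Pi.sub_apply, sum_sub_distrib, sum_range_inv_two_pow_succ,
      sum_indicator_binaryDigits, hfloor, Int.cast_zero, sub_zero] at hbound
    change μ {x : ℕ+ | padicValNat 2 x ∈ (binaryDigits r)ᶜ} ≤ _
    linarith [sub_inv_le_floor_mul_div r (pow_pos two_pos n)]

theorem stmt8 (μ : Set ℕ+ → ℝ)
    (huniv : μ Set.univ = 1) (hle : ∀ X : Set ℕ+, μ X ≤ 1)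
    (hsub : ∀ X Y : Set ℕ+, μ (X ∪ Y) ≤ μ X + μ Y)
    (hhom : ∀ (X : Set ℕ+) (h k : ℕ+),
      μ ((fun x => k * x + h) '' X) = ((k : ℕ) : ℝ)⁻¹ * μ X) :
    Set.range μ = Set.Icc 0 1 ∧
    Set.range (fun X : Set ℕ+ => 1 - μ Xᶜ) = Set.Icc 0 1 ∧
    {r : ℝ | ∃ X : Set ℕ+, 1 - μ Xᶜ = μ X ∧ μ X = r} = Set.Icc 0 1 := by
  have hnonneg (X : Set ℕ+) : 0 ≤ μ X := by
    linarith [one_le_map_add_map_compl huniv hsub X, hle Xᶜ]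
  have hrealize {r : ℝ} (hr : r ∈ Set.Icc (0 : ℝ) 1) :=
    exists_map_eq_and_map_compl_eq huniv hle hsub hhom hr
  refine ⟨subset_antisymm ?_ ?_, subset_antisymm ?_ ?_, subset_antisymm ?_ ?_⟩
  · rintro _ ⟨X, rfl⟩
    exact ⟨hnonneg X, hle X⟩
  · intro r hr
    obtain ⟨X, hX, -⟩ := hrealize hr
    exact ⟨X, hX⟩
  · rintro _ ⟨X, rfl⟩
    exact ⟨by linarith [hle Xᶜ], by linarith [hnonneg Xᶜ]⟩
  · intro r hr
    obtain ⟨X, -, hXc⟩ := hrealize hr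
    exact ⟨X, by simp only [hXc, sub_sub_cancel]⟩
  · rintro _ ⟨X, -, rfl⟩
    exact ⟨hnonneg X, hle X⟩
  · intro r hr
    obtain ⟨X, hX, hXc⟩ := hrealize hr
    exact ⟨X, by rw [hX, hXc, sub_sub_cancel], hX⟩
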